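/- arXiv:2301.03810 — 3 statements merged into one kernel-verified Lean document; each statement's English description precedes it below -/
import Mathlib

section
/- The structure function Φ(z) = (z + η - (2−√(1−16b₃))/4)(z + η − (2+√(1−16b₃))/4)(z + η + (2b₁(√(−b₁)−2b₂)+E²)/(4(−b₁)^{3/2})), with η = −(2b₁(√(−b₁)−2b₂)+E²)/(4(−b₁)^{3/2}), satisfies Φ(0)=0 and Φ(p+1)=0 if and only if E² = 4(−b₁)^{3/2}(p+1 + ε√(1−16b₃)/4 − b₂/√(−b₁)) for some ε ∈ {−1, +1}. -/
theorem stmt0 (b₁ b₂ b₃ : ℝ) (hb₁ : b₁ < 0) (hb₂ : b₂ ≤ 0) (hb₃ : b₃ < 1/16)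
    (p : ℕ) (hp : 0 < p) (E η : ℝ)
    (hη : η = -(2*b₁*(Real.sqrt (-b₁) - 2*b₂) + E^2) / (4 * Real.sqrt (-b₁)^3))
    (Φ : ℝ → ℝ)
    (hΦ : ∀ z, Φ z =
      (z + η - (2 - Real.sqrt (1 - 16*b₃))/4) *
      (z + η - (2 + Real.sqrt (1 - 16*b₃))/4) *
      (z + η + (2*b₁*(Real.sqrt (-b₁) - 2*b₂) + E^2) / (4 * Real.sqrt (-b₁)^3))) :
    (Φ 0 = 0 ∧ Φ ((p : ℝ) + 1) = 0) ↔
      ∃ ε : ℝ, (ε = -1 ∨ ε = 1) ∧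
        E^2 = 4 * Real.sqrt (-b₁)^3 *
          ((p : ℝ) + 1 + ε * Real.sqrt (1 - 16*b₃)/4 - b₂ / Real.sqrt (-b₁)) := by
  set a := Real.sqrt (-b₁) with hA
  set s := Real.sqrt (1 - 16*b₃) with hS
  have ha : 0 < a := Real.sqrt_pos.2 (by linarith)
  have ha2 : a^2 = -b₁ := Real.sq_sqrt (by linarith)
  have h4 : (4:ℝ) * a^3 ≠ 0 := by positivity
  have hE : E^2 = -(4*a^3)*η - 2*b₁*(a - 2*b₂) := by
    have h := hη
    field_simp at h
    linarith
  have hzero : η + (2*b₁*(a - 2*b₂) + E^2) / (4 * a^3) = 0 := by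
    rw [hη]; field_simp; ring
  have hΦ0 : Φ 0 = 0 := by
    rw [hΦ 0]
    have : (0:ℝ) + η + (2*b₁*(a - 2*b₂) + E^2) / (4 * a^3) = 0 := by
      rw [zero_add]; exact hzero
    rw [this, mul_zero]
  have hp1 : ((p:ℝ) + 1) ≠ 0 := by positivity
  have h3 : ((p:ℝ)+1) + η + (2*b₁*(a - 2*b₂) + E^2) / (4 * a^3) = (p:ℝ)+1 := by
    linarith
  constructor
  · rintro ⟨-, h⟩
    rw [hΦ, h3, mul_eq_zero, mul_eq_zero] at h
    rcases h with (h | h) | h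
    · refine ⟨1, Or.inr rfl, ?_⟩
      have key : 4*a^3*((p:ℝ)+1+1*s/4 - b₂/a) = 4*a^3*((p:ℝ)+1) + a^3*s - 4*a^2*b₂ := by
        field_simp
      rw [key]
      linear_combination hE - 4*a^3*h - 2*(a-2*b₂)*ha2
    · refine ⟨-1, Or.inl rfl, ?_⟩
      have key : 4*a^3*((p:ℝ)+1+(-1)*s/4 - b₂/a) = 4*a^3*((p:ℝ)+1) - a^3*s - 4*a^2*b₂ := by
        field_simp; ring
      rw [key]
      linear_combination hE - 4*a^3*h - 2*(a-2*b₂)*ha2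
    · exact absurd h hp1
  · rintro ⟨ε, hε, hE2⟩
    refine ⟨hΦ0, ?_⟩
    rw [hΦ, h3]
    have hη2 : η = (2 - ε*s)/4 - ((p:ℝ)+1) := by
      have key : 4*a^3*((p:ℝ)+1+ε*s/4 - b₂/a) = 4*a^3*((p:ℝ)+1) + ε*a^3*s - 4*a^2*b₂ := by
        field_simp
      rw [key] at hE2
      have h4' : (0:ℝ) < 4*a^3 := by positivity
      have : η * (4*a^3) = ((2 - ε*s)/4 - ((p:ℝ)+1)) * (4*a^3) := by
        linear_combination hE - hE2 + (4*b₂-2*a)*ha2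
      exact mul_right_cancel₀ (ne_of_gt h4') this
    rcases hε with rfl | rfl
    · have : ((p:ℝ)+1) + η - (2+s)/4 = 0 := by rw [hη2]; ring
      rw [this, mul_zero, zero_mul]
    · have : ((p:ℝ)+1) + η - (2-s)/4 = 0 := by rw [hη2]; ring
      rw [this, zero_mul, zero_mul]
end

section
/- For real a₁ > 0, a₃ > 0, a₂ ∈ ℝ and nonnegative integer p, the real number E = √((√(128a₁a₂²a₃² + a₂⁴(16a₃+1) + 64a₃⁴(p+1)²) + 32a₁a₃² + a₂²(8a₃+1))/(8a₃)) satisfies the algebraic equation √(64a₁²a₃² + 4a₁(a₂²(8a₃−1) − 8a₃E²) + 4a₂⁴ − a₂²(8a₃+1)E²/a₃ + 4E⁴) = 2a₃(p+1). -/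
theorem stmt1 (a₁ a₂ a₃ : ℝ) (ha₁ : 0 < a₁) (ha₃ : 0 < a₃) (p : ℕ) (E : ℝ)
    (hE : E = Real.sqrt ((Real.sqrt (128*a₁*a₂^2*a₃^2 + a₂^4*(16*a₃+1)
        + 64*a₃^4*((p : ℝ)+1)^2) + 32*a₁*a₃^2 + a₂^2*(8*a₃+1)) / (8*a₃))) :
    Real.sqrt (64*a₁^2*a₃^2 + 4*a₁*(a₂^2*(8*a₃-1) - 8*a₃*E^2) + 4*a₂^4
        - a₂^2*(8*a₃+1)*E^2/a₃ + 4*E^4) = 2*a₃*((p : ℝ)+1) := by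
  set P : ℝ := (p : ℝ) + 1 with hPdef
  have hP : 0 < P := by positivity
  set inner : ℝ := 128*a₁*a₂^2*a₃^2 + a₂^4*(16*a₃+1) + 64*a₃^4*P^2 with hidef
  have hinner : 0 ≤ inner := by positivity
  set s : ℝ := Real.sqrt inner with hsdef
  have hs0 : 0 ≤ s := Real.sqrt_nonneg _
  have hs2 : s^2 = inner := Real.sq_sqrt hinner
  have hnum : 0 ≤ (s + 32*a₁*a₃^2 + a₂^2*(8*a₃+1)) / (8*a₃) := by positivity
  have hE2 : E^2 = (s + 32*a₁*a₃^2 + a₂^2*(8*a₃+1)) / (8*a₃) := by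
    rw [hE]; exact Real.sq_sqrt hnum
  have h4 : E^4 = ((s + 32*a₁*a₃^2 + a₂^2*(8*a₃+1)) / (8*a₃))^2 := by
    rw [← hE2]; ring
  have key : 64*a₁^2*a₃^2 + 4*a₁*(a₂^2*(8*a₃-1) - 8*a₃*E^2) + 4*a₂^4
      - a₂^2*(8*a₃+1)*E^2/a₃ + 4*E^4 = (2*a₃*P)^2 := by
    rw [hE2, h4]
    field_simp
    nlinarith [hs2]
  rw [key, Real.sqrt_sq (by positivity)]
end

section
/- Define f₀(p) = 3(p²+2p+3)² − 2^{2/3}·e(p) − 2·2^{1/3}(6p²+12p+31)/e(p) + 8 where e(p) = (27p⁴+108p³+252p²+3√3·√((p+1)⁴(27p⁴+108p³+310p²+404p+575))+288p+367)^{1/3}. Then f₀(p) > 0 for all nonnegative integers p. In particular f₀(0) = −62·(2/(15√69+367))^{1/3} − 2^{2/3}(15√69+367)^{1/3} + 35 > 0. -/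
noncomputable def e7 (p : ℝ) : ℝ :=
  (27*p^4 + 108*p^3 + 252*p^2
    + 3*Real.sqrt 3 * Real.sqrt ((p+1)^4*(27*p^4+108*p^3+310*p^2+404*p+575))
    + 288*p + 367) ^ ((1 : ℝ)/3)

noncomputable def f0 (p : ℝ) : ℝ :=
  3*(p^2+2*p+3)^2 - (2:ℝ)^((2:ℝ)/3) * e7 p
    - 2*(2:ℝ)^((1:ℝ)/3)*(6*p^2+12*p+31) / e7 p + 8

/-!
Write `e(p)³ = S + D` with `S = 27p⁴ + 108p³ + 252p² + 288p + 367` and `D` the square-root term,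
and put `u = 2^{2/3} e(p)`, `B = 6p² + 12p + 31`, `A = 3(p² + 2p + 3)² + 8`. Then
`f₀(p) = A - x` with `x = u + 4B/u`, and since `u³ = 4(S + D)` and `S² - D² = 4B³` (Cardano's
formula in reverse), `x` is a root of the depressed cubic `x³ = 12Bx + 8S`. Moreover
`x² ≥ 4 · u · (4B/u) = 16B`, and on `{t ≥ 0, t² ≥ 12B}` the map `t ↦ t³ - 12Bt` is increasing.
In the variable `q = p + 1` one computes
`A³ - 12BA - 8S = q²(27q¹⁰ + 324q⁸ + 1836q⁶ + 5832q⁴ + 10260q² + 8640)`,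
which is positive unless `p = -1`; hence `x < A`.
-/

open Real

lemma lt_of_pow_three_sub_mul_lt {k x a : ℝ} (ha : 0 ≤ a) (hk : k ≤ x ^ 2)
    (h : x ^ 3 - k * x < a ^ 3 - k * a) : x < a := by
  by_contra! hax
  have : 0 ≤ (x - a) * (a ^ 2 + a * x + x ^ 2 - k) :=
    mul_nonneg (by linarith) (by nlinarith)
  nlinarith

lemma add_div_pow_three_eq {u S D B : ℝ} (hu : u ≠ 0) (hu3 : u ^ 3 = 4 * (S + D))
    (hSD : S ^ 2 - D ^ 2 = 4 * B ^ 3) :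
    (u + 4 * B / u) ^ 3 = 12 * B * (u + 4 * B / u) + 8 * S := by
  field_simp
  linear_combination (u ^ 3 + 4 * (S + D) - 8 * S) * hu3 - 16 * hSD

lemma add_div_lt_of_pow_three_eq {A B S D u : ℝ} (hA : 0 ≤ A) (hB : 0 ≤ B) (hu : u ≠ 0)
    (hu3 : u ^ 3 = 4 * (S + D)) (hSD : S ^ 2 - D ^ 2 = 4 * B ^ 3)
    (hgap : 12 * B * A + 8 * S < A ^ 3) : u + 4 * B / u < A := by
  have hsq : 16 * B ≤ (u + 4 * B / u) ^ 2 := by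
    have h4 : 4 * u * (4 * B / u) = 16 * B := by field_simp; ring
    exact h4 ▸ four_mul_le_sq_add u (4 * B / u)
  refine lt_of_pow_three_sub_mul_lt (k := 12 * B) hA (by linarith) ?_
  rw [add_div_pow_three_eq hu hu3 hSD]
  linarith

lemma rpow_one_div_three_pow_three {a : ℝ} (ha : 0 ≤ a) : (a ^ ((1 : ℝ) / 3)) ^ 3 = a := by
  rw [one_div]
  exact_mod_cast rpow_inv_natCast_pow ha three_ne_zero

lemma f0_eq_sub (p : ℝ) :
    f0 p = 3 * (p ^ 2 + 2 * p + 3) ^ 2 + 8 - ((2 : ℝ) ^ ((2 : ℝ) / 3) * e7 p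
      + 4 * (6 * p ^ 2 + 12 * p + 31) / ((2 : ℝ) ^ ((2 : ℝ) / 3) * e7 p)) := by
  have h2 : (2 : ℝ) ^ ((2 : ℝ) / 3) * (2 : ℝ) ^ ((1 : ℝ) / 3) = 2 := by
    rw [← rpow_add two_pos]
    norm_num
  have h4 : 4 * (6 * p ^ 2 + 12 * p + 31) / (2 : ℝ) ^ ((2 : ℝ) / 3)
      = 2 * (2 : ℝ) ^ ((1 : ℝ) / 3) * (6 * p ^ 2 + 12 * p + 31) := by
    rw [div_eq_iff (by positivity)]
    linear_combination (-2 * (6 * p ^ 2 + 12 * p + 31)) * h2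
  rw [f0, ← div_div, h4]
  ring

theorem f0_pos {p : ℝ} (hp : p ≠ -1) : 0 < f0 p := by
  set S := 27 * p ^ 4 + 108 * p ^ 3 + 252 * p ^ 2 + 288 * p + 367 with hS
  set Q := 27 * p ^ 4 + 108 * p ^ 3 + 310 * p ^ 2 + 404 * p + 575 with hQ
  set D := 3 * √3 * √((p + 1) ^ 4 * Q) with hD
  have hD2 : D ^ 2 = 27 * ((p + 1) ^ 4 * Q) := by
    have : 0 ≤ Q := by nlinarith [sq_nonneg (p + 1), sq_nonneg (p ^ 2 + 2 * p)]
    rw [hD, mul_pow, mul_pow, sq_sqrt zero_le_three, sq_sqrt (by positivity)]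
    norm_num
  have hSD : 0 < S + D := by
    have : 0 ≤ D := by positivity
    nlinarith [sq_nonneg (p + 1), sq_nonneg (p ^ 2 + 2 * p)]
  have he7 : e7 p = (S + D) ^ ((1 : ℝ) / 3) := by
    rw [e7, ← hQ, ← hD, hS]
    ring_nf
  have hu3 : ((2 : ℝ) ^ ((2 : ℝ) / 3) * e7 p) ^ 3 = 4 * (S + D) := by
    rw [mul_pow, he7, rpow_one_div_three_pow_three hSD.le, ← rpow_natCast, ← rpow_mul zero_le_two]
    norm_num
  have hgap : 12 * (6 * p ^ 2 + 12 * p + 31) * (3 * (p ^ 2 + 2 * p + 3) ^ 2 + 8) + 8 * S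
      < (3 * (p ^ 2 + 2 * p + 3) ^ 2 + 8) ^ 3 := by
    have : p + 1 ≠ 0 := by contrapose! hp; linarith
    have hpoly : 0 < (p + 1) ^ 2 * (27 * (p + 1) ^ 10 + 324 * (p + 1) ^ 8 + 1836 * (p + 1) ^ 6
        + 5832 * (p + 1) ^ 4 + 10260 * (p + 1) ^ 2 + 8640) := by positivity
    linear_combination hpoly
  rw [f0_eq_sub, sub_pos]
  exact add_div_lt_of_pow_three_eq (by positivity) (by nlinarith [sq_nonneg (p + 1)])
    (by rw [he7]; positivity) hu3 (by rw [hD2, hQ]; ring) hgap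

lemma e7_zero : e7 0 = (15 * √69 + 367) ^ ((1 : ℝ) / 3) := by
  have h : 3 * √3 * √575 = 15 * √69 := by
    rw [mul_assoc, ← sqrt_mul zero_le_three, show (3 * 575 : ℝ) = 5 ^ 2 * 69 by norm_num,
      sqrt_mul (by positivity), sqrt_sq (by norm_num)]
    ring
  unfold e7
  norm_num [h]

theorem stmt7 :
    (∀ p : ℕ, 0 < f0 (p : ℝ)) ∧
    f0 0 = -62*(2/(15*Real.sqrt 69+367))^((1:ℝ)/3)
            - (2:ℝ)^((2:ℝ)/3)*(15*Real.sqrt 69+367)^((1:ℝ)/3) + 35 ∧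
    0 < f0 0 := by
  have hpos : ∀ p : ℕ, 0 < f0 (p : ℝ) := fun p => f0_pos (by linarith [p.cast_nonneg (α := ℝ)])
  refine ⟨hpos, ?_, by exact_mod_cast hpos 0⟩
  have hc : 0 < 15 * √69 + 367 := by positivity
  have hcpos : 0 < (15 * √69 + 367) ^ ((1 : ℝ) / 3) := by positivity
  rw [f0, e7_zero, div_rpow zero_le_two hc.le]
  field_simp
  ring
end
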